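/- The sum of the interior angles of any translation triangle in Sol geometry is greater than or equal to π. Precisely: let A₁ be the origin, A₂, A₃ ∈ ℝ³, and for each pair let the side be the translation curve between them; define ω₁ as the angle at the origin between the initial unit tangents of the curves to A₂ and A₃, and ω₂, ω₃ as the corresponding angles after translating A₂ (resp. A₃) to the origin by the Sol translation. Then ω₁ + ω₂ + ω₃ ≥ π. -/

import Mathlib

/-!
A point determines the unit tangent of the translation curve reaching it, because `solCurve p t`
depends only on `t • p` and `v ↦ solCurve v 1` is injective. Reversing a curve negates its
tangent: translated by `A⁻¹`, the curve from `A` back to the origin starts with `-p` when the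
curve from the origin to `A` starts with `p`; and `(A₂⁻¹A₃)⁻¹ = A₃⁻¹A₂`. So if `u₃` is the
tangent of the side `A₂A₃` at `A₂`, then `ω₂ = π - ∠(t₂, u₃)` and `ω₃ = ∠(t₃, u₃)`, and
`ω₁ + ω₂ + ω₃ ≥ π` is the triangle inequality `∠(t₂, u₃) ≤ ∠(t₂, t₃) + ∠(t₃, u₃)` for angles
between vectors of ℝ³.
-/

/-- The translation curve from the origin with initial tangent vector `p`. -/
noncomputable def solCurve (p : ℝ × ℝ × ℝ) (t : ℝ) : ℝ × ℝ × ℝ :=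
  if p.2.2 = 0 then (p.1 * t, p.2.1 * t, 0)
  else (-(p.1 / p.2.2) * (Real.exp (-(p.2.2 * t)) - 1),
        (p.2.1 / p.2.2) * (Real.exp (p.2.2 * t) - 1), p.2.2 * t)

/-- `p` is the unit initial tangent vector of the translation curve from the
origin to `A`. -/
noncomputable def IsInitialTangent (p A : ℝ × ℝ × ℝ) : Prop :=
  p.1 ^ 2 + p.2.1 ^ 2 + p.2.2 ^ 2 = 1 ∧ ∃ t > (0:ℝ), solCurve p t = A

/-- The inverse of the Sol translation carrying the origin to `A`. -/
noncomputable def solInvTrans (A q : ℝ × ℝ × ℝ) : ℝ × ℝ × ℝ :=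
  ((q.1 - A.1) * Real.exp A.2.2, (q.2.1 - A.2.1) * Real.exp (-A.2.2),
    q.2.2 - A.2.2)

/-- The (Euclidean) angle between two tangent vectors at the origin. -/
noncomputable def ang (p q : ℝ × ℝ × ℝ) : ℝ :=
  Real.arccos (p.1 * q.1 + p.2.1 * q.2.1 + p.2.2 * q.2.2)

open InnerProductGeometry

theorem solCurve_eq_solCurve_smul (p : ℝ × ℝ × ℝ) (t : ℝ) :
    solCurve p t = solCurve (t • p) 1 := by
  obtain ⟨p₁, p₂, p₃⟩ := p
  rcases eq_or_ne t 0 with rfl | ht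
  · by_cases hp₃ : p₃ = 0 <;> simp [solCurve, hp₃]
  by_cases hp₃ : p₃ = 0
  · simp [solCurve, hp₃, mul_comm t]
  · simp only [solCurve, Prod.smul_mk, smul_eq_mul, mul_eq_zero, ht, hp₃, or_self, if_false,
      mul_one, Prod.mk.injEq]
    refine ⟨?_, ?_, mul_comm _ _⟩ <;> field_simp

theorem solCurve_snd_snd (v : ℝ × ℝ × ℝ) (t : ℝ) : (solCurve v t).2.2 = v.2.2 * t := by
  unfold solCurve
  split_ifs with h <;> simp [h]

theorem solCurve_one_injective : Function.Injective (solCurve · 1) := by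
  rintro ⟨v₁, v₂, v₃⟩ ⟨w₁, w₂, w₃⟩ h
  obtain rfl : v₃ = w₃ := by simpa [solCurve_snd_snd] using congrArg (·.2.2) h
  by_cases hv₃ : v₃ = 0
  · simpa [solCurve, hv₃] using h
  have hexp : Real.exp (-v₃) - 1 ≠ 0 := sub_ne_zero.2 (by simpa using hv₃)
  have hexp' : Real.exp v₃ - 1 ≠ 0 := sub_ne_zero.2 (by simpa using hv₃)
  simp only [solCurve, hv₃, if_false, mul_one, Prod.mk.injEq] at h
  simp_all

theorem IsInitialTangent.unique {p q A : ℝ × ℝ × ℝ} (hp : IsInitialTangent p A)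
    (hq : IsInitialTangent q A) : p = q := by
  obtain ⟨hp₁, t, ht, rfl⟩ := hp
  obtain ⟨hq₁, s, hs, hqs⟩ := hq
  rw [solCurve_eq_solCurve_smul, solCurve_eq_solCurve_smul p] at hqs
  obtain ⟨h₁, h₂, h₃⟩ :=
    Prod.ext_iff.1 (solCurve_one_injective hqs).symm |>.imp_right Prod.ext_iff.1
  simp only [Prod.smul_fst, Prod.smul_snd, smul_eq_mul] at h₁ h₂ h₃
  have hst : s ^ 2 = t ^ 2 := by
    linear_combination t ^ 2 * hp₁ - s ^ 2 * hq₁ - (s * q.1 + t * p.1) * h₁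
      - (s * q.2.1 + t * p.2.1) * h₂ - (s * q.2.2 + t * p.2.2) * h₃
  obtain rfl : s = t := (sq_eq_sq₀ hs.le ht.le).1 hst
  ext <;> apply mul_left_cancel₀ hs.ne' <;> assumption

theorem solCurve_neg (p : ℝ × ℝ × ℝ) (t : ℝ) :
    solCurve (-p) t = solInvTrans (solCurve p t) 0 := by
  obtain ⟨p₁, p₂, p₃⟩ := p
  by_cases hp₃ : p₃ = 0
  · simp [solCurve, solInvTrans, hp₃]
  · simp only [solCurve, solInvTrans, Prod.neg_mk, neg_eq_zero, hp₃, if_false, Prod.fst_zero,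
      Prod.snd_zero, Prod.mk.injEq]
    refine ⟨?_, ?_, by ring⟩ <;> field_simp <;> rw [Real.exp_neg] <;> field_simp <;> ring

theorem IsInitialTangent.neg {p A : ℝ × ℝ × ℝ} (hp : IsInitialTangent p A) :
    IsInitialTangent (-p) (solInvTrans A 0) := by
  obtain ⟨hp₁, t, ht, rfl⟩ := hp
  exact ⟨by simpa using hp₁, t, ht, solCurve_neg p t⟩

theorem solInvTrans_solInvTrans_zero (A B : ℝ × ℝ × ℝ) :
    solInvTrans (solInvTrans A B) 0 = solInvTrans B A := by
  simp only [solInvTrans, Prod.fst_zero, Prod.snd_zero, Prod.mk.injEq]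
  have h₁ : Real.exp A.2.2 * Real.exp (B.2.2 - A.2.2) = Real.exp B.2.2 := by
    rw [← Real.exp_add, add_sub_cancel]
  have h₂ : Real.exp (-A.2.2) * Real.exp (-(B.2.2 - A.2.2)) = Real.exp (-B.2.2) := by
    rw [← Real.exp_add]; ring_nf
  exact ⟨by linear_combination (A.1 - B.1) * h₁, by linear_combination (A.2.1 - B.2.1) * h₂,
    by ring⟩

def tripleToEuclidean (p : ℝ × ℝ × ℝ) : EuclideanSpace ℝ (Fin 3) := !₂[p.1, p.2.1, p.2.2]

theorem tripleToEuclidean_neg (p : ℝ × ℝ × ℝ) :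
    tripleToEuclidean (-p) = -tripleToEuclidean p := by
  ext i; fin_cases i <;> simp [tripleToEuclidean]

theorem inner_tripleToEuclidean (p q : ℝ × ℝ × ℝ) :
    inner ℝ (tripleToEuclidean p) (tripleToEuclidean q) =
      p.1 * q.1 + p.2.1 * q.2.1 + p.2.2 * q.2.2 := by
  simp only [tripleToEuclidean, PiLp.inner_apply, RCLike.inner_apply, Real.ringHom_apply,
    Fin.sum_univ_three, Fin.isValue, Matrix.cons_val_zero, Matrix.cons_val_one, Matrix.cons_val]
  ring

theorem norm_tripleToEuclidean_eq_one {p : ℝ × ℝ × ℝ}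
    (hp : p.1 ^ 2 + p.2.1 ^ 2 + p.2.2 ^ 2 = 1) : ‖tripleToEuclidean p‖ = 1 := by
  rw [norm_eq_sqrt_real_inner, inner_tripleToEuclidean]
  simp [← sq, hp]

theorem ang_eq_angle {p q : ℝ × ℝ × ℝ} (hp : p.1 ^ 2 + p.2.1 ^ 2 + p.2.2 ^ 2 = 1)
    (hq : q.1 ^ 2 + q.2.1 ^ 2 + q.2.2 ^ 2 = 1) :
    ang p q = angle (tripleToEuclidean p) (tripleToEuclidean q) := by
  rw [ang, angle, inner_tripleToEuclidean, norm_tripleToEuclidean_eq_one hp,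
    norm_tripleToEuclidean_eq_one hq, mul_one, div_one]

theorem translation_triangle_angle_sum_ge_pi_general
    (A₂ A₃ : ℝ × ℝ × ℝ)
    (t₂ t₃ u₁ u₃ v₁ v₂ : ℝ × ℝ × ℝ)
    (ht₂ : IsInitialTangent t₂ A₂)
    (ht₃ : IsInitialTangent t₃ A₃)
    (hu₁ : IsInitialTangent u₁ (solInvTrans A₂ 0))
    (hu₃ : IsInitialTangent u₃ (solInvTrans A₂ A₃))
    (hv₁ : IsInitialTangent v₁ (solInvTrans A₃ 0))
    (hv₂ : IsInitialTangent v₂ (solInvTrans A₃ A₂)) :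
    ang t₂ t₃ + ang u₁ u₃ + ang v₁ v₂ ≥ Real.pi := by
  obtain rfl : u₁ = -t₂ := hu₁.unique ht₂.neg
  obtain rfl : v₁ = -t₃ := hv₁.unique ht₃.neg
  obtain rfl : v₂ = -u₃ := hv₂.unique (solInvTrans_solInvTrans_zero A₂ A₃ ▸ hu₃.neg)
  rw [ang_eq_angle ht₂.1 ht₃.1, ang_eq_angle hu₁.1 hu₃.1, ang_eq_angle hv₁.1 hv₂.1,
    tripleToEuclidean_neg, tripleToEuclidean_neg, tripleToEuclidean_neg, angle_neg_left,
    angle_neg_neg]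
  linarith [angle_le_angle_add_angle (tripleToEuclidean t₂) (tripleToEuclidean t₃)
    (tripleToEuclidean u₃)]

theorem translation_triangle_angle_sum_ge_pi
    (A₂ A₃ : ℝ × ℝ × ℝ) (h2 : A₂ ≠ 0) (h3 : A₃ ≠ 0) (h23 : A₂ ≠ A₃)
    (t₂ t₃ u₁ u₃ v₁ v₂ : ℝ × ℝ × ℝ)
    (ht₂ : IsInitialTangent t₂ A₂)
    (ht₃ : IsInitialTangent t₃ A₃)
    (hu₁ : IsInitialTangent u₁ (solInvTrans A₂ 0))
    (hu₃ : IsInitialTangent u₃ (solInvTrans A₂ A₃))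
    (hv₁ : IsInitialTangent v₁ (solInvTrans A₃ 0))
    (hv₂ : IsInitialTangent v₂ (solInvTrans A₃ A₂)) :
    ang t₂ t₃ + ang u₁ u₃ + ang v₁ v₂ ≥ Real.pi :=
  translation_triangle_angle_sum_ge_pi_general A₂ A₃ t₂ t₃ u₁ u₃ v₁ v₂ ht₂ ht₃ hu₁ hu₃ hv₁ hv₂
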